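/- arXiv:1202.3428 — 6 statements merged into one kernel-verified Lean document; each statement's English description precedes it below -/
import Mathlib

section
/- An odd composite N coprime to b and to |b|_N is a Midy pseudoprime to base b if and only if every divisor of N greater than 1 is either prime or itself a Midy pseudoprime to base b. -/
/-- The multiplicative order of `b` modulo `N`. -/
noncomputable def ord (b N : ℕ) : ℕ := orderOf (b : ZMod N)

/-- `N` is a Midy pseudoprime to base `b`: `N` is odd composite, coprime to `b` and to
`|b|_N`, and `|b|_N = |b|_p` for every prime `p ∣ N` (equivalent characterization). -/
def MidyPsp (b N : ℕ) : Prop :=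
  Odd N ∧ 1 < N ∧ ¬ N.Prime ∧ Nat.Coprime N b ∧ Nat.Coprime N (ord b N) ∧
    ∀ p : ℕ, p.Prime → p ∣ N → ord b N = ord b p

lemma ord_dvd_of_dvd (b m N : ℕ) (h : m ∣ N) : ord b m ∣ ord b N := by
  unfold ord
  have hcast : (b : ZMod m) = (ZMod.castHom h (ZMod m)).toMonoidHom (b : ZMod N) := by
    simp
  rw [hcast]
  exact orderOf_map_dvd _ _

theorem stmt9 (b N : ℕ) (hb : 1 < b) (hodd : Odd N) (hN : 1 < N)
    (hcomp : ¬ N.Prime) (hco : Nat.Coprime N b) (hco' : Nat.Coprime N (ord b N)) :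
    MidyPsp b N ↔ ∀ m : ℕ, m ∣ N → 1 < m → (m.Prime ∨ MidyPsp b m) := by
  constructor
  · rintro ⟨-, -, -, -, -, hords⟩ m hmN hm
    by_cases hmp : m.Prime
    · exact Or.inl hmp
    right
    -- m has the same order as N
    have hordeq : ord b m = ord b N := by
      refine Nat.dvd_antisymm (ord_dvd_of_dvd b m N hmN) ?_
      obtain ⟨p, hp, hpm⟩ := Nat.exists_prime_and_dvd (Nat.ne_of_gt hm)
      have h1 : ord b N = ord b p := hords p hp (hpm.trans hmN)
      rw [h1]
      exact ord_dvd_of_dvd b p m hpm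
    have hmodd : Odd m := by
      rcases Nat.even_or_odd m with he | ho
      · exfalso
        have : (2 : ℕ) ∣ N := dvd_trans he.two_dvd hmN
        exact (Nat.not_odd_iff_even.mpr ((even_iff_two_dvd).mpr this)) hodd
      · exact ho
    refine ⟨hmodd, hm, hmp, Nat.Coprime.coprime_dvd_left hmN hco, ?_, ?_⟩
    · rw [hordeq]; exact Nat.Coprime.coprime_dvd_left hmN hco'
    · intro p hp hpm
      rw [hordeq]
      exact hords p hp (hpm.trans hmN)
  · intro h
    rcases h N dvd_rfl hN with hp | hpsp
    · exact absurd hp hcomp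
    · exact hpsp
end

section
/- Let N > 2 and f_N(b) = Φ_N(b) / gcd(N, Φ_N(b)). If f_N(b) is composite, then f_N(b) is a Midy pseudoprime to base b. -/
/-- `f_N(b) = Φ_N(b) / gcd(N, Φ_N(b))`. -/
noncomputable def fval (N b : ℕ) : ℕ :=
  ((Polynomial.cyclotomic N ℤ).eval (b : ℤ)).toNat /
    Nat.gcd N ((Polynomial.cyclotomic N ℤ).eval (b : ℤ)).toNat

open Polynomial Finset

lemma isRoot_cyclotomic_zmod_iff {N d : ℕ} {b : ℤ} :
    (cyclotomic N (ZMod d)).IsRoot (b : ZMod d) ↔ (d : ℤ) ∣ (cyclotomic N ℤ).eval b := by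
  rw [IsRoot, ← eq_intCast (Int.castRingHom (ZMod d)) b, cyclotomic.eval_apply, eq_intCast,
    ZMod.intCast_zmod_eq_zero_iff_dvd]

lemma intCast_pow_eq_one_of_dvd_cyclotomic_eval {N d : ℕ} {b : ℤ}
    (h : (d : ℤ) ∣ (cyclotomic N ℤ).eval b) : (b : ZMod d) ^ N = 1 := by
  have h' : (d : ℤ) ∣ b ^ N - 1 := by
    simpa using h.trans (eval_dvd (x := b) (cyclotomic.dvd_X_pow_sub_one N ℤ))
  rw [← ZMod.intCast_zmod_eq_zero_iff_dvd] at h'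
  push_cast at h'
  exact sub_eq_zero.mp h'

lemma isPrimitiveRoot_of_prime_dvd_cyclotomic_eval {N p : ℕ} [Fact p.Prime] {b : ℤ}
    (hpN : ¬ p ∣ N) (h : (p : ℤ) ∣ (cyclotomic N ℤ).eval b) : IsPrimitiveRoot (b : ZMod p) N :=
  have : NeZero (N : ZMod p) := ⟨by rwa [Ne, ZMod.natCast_eq_zero_iff]⟩
  isRoot_cyclotomic_iff.mp (isRoot_cyclotomic_zmod_iff.mpr h)

lemma isPrimitiveRoot_of_prime_dvd_cyclotomic_eval_mul {n p : ℕ} [Fact p.Prime] {b : ℤ}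
    (hpn : ¬ p ∣ n) (h : (p : ℤ) ∣ (cyclotomic (n * p) ℤ).eval b) :
    IsPrimitiveRoot (b : ZMod p) n := by
  have : NeZero (n : ZMod p) := ⟨by rwa [Ne, ZMod.natCast_eq_zero_iff]⟩
  rw [← isRoot_cyclotomic_zmod_iff, cyclotomic_mul_prime_eq_pow_of_not_dvd _ hpn, IsRoot,
    eval_pow, pow_eq_zero_iff (Nat.sub_ne_zero_of_lt (Fact.out : p.Prime).one_lt)] at h
  exact isRoot_cyclotomic_iff.mp h

lemma IsPrimitiveRoot.dvd_card_sub_one {n p : ℕ} [Fact p.Prime] {x : ZMod p}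
    (hx : IsPrimitiveRoot x n) (hn : n ≠ 0) : n ∣ p - 1 :=
  hx.eq_orderOf ▸ ZMod.orderOf_dvd_card_sub_one (hx.ne_zero hn)

lemma cyclotomic_dvd_geom_sum_X_pow (R : Type*) [CommRing R] [IsDomain R] {m k : ℕ}
    (hm : m ≠ 0) (hk : 1 < k) : cyclotomic (m * k) R ∣ ∑ i ∈ range k, (X ^ m) ^ i := by
  have hmem : m ∈ (m * k).properDivisors :=
    Nat.mem_properDivisors.mpr ⟨dvd_mul_right m k, lt_mul_right (Nat.pos_of_ne_zero hm) hk⟩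
  have h := X_pow_sub_one_mul_cyclotomic_dvd_X_pow_sub_one_of_dvd R hmem
  rw [pow_mul, ← geom_sum_mul (X ^ m) k, mul_comm (∑ i ∈ range k, _)] at h
  have hX : (X ^ m - 1 : R[X]) ≠ 0 := by
    simpa using X_pow_sub_C_ne_zero (Nat.pos_of_ne_zero hm) (1 : R)
  exact (mul_dvd_mul_iff_left hX).mp h

-- A primitive `m`-th root of unity in `ZMod 2` forces `m = 1`.
lemma two_dvd_of_two_dvd_cyclotomic_eval_two_mul {m : ℕ} {b : ℤ} (hm : 1 < m)
    (h : (2 : ℤ) ∣ (cyclotomic (2 * m) ℤ).eval b) : 2 ∣ m := by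
  have := Fact.mk Nat.prime_two
  by_contra h2m
  have hroot := isPrimitiveRoot_of_prime_dvd_cyclotomic_eval_mul h2m
    (by rwa [mul_comm] at h)
  have := Nat.le_of_dvd one_pos (hroot.dvd_card_sub_one (by omega))
  omega

lemma not_sq_dvd_cyclotomic_eval {N p : ℕ} (hN : 2 < N) (hp : p.Prime) (hpN : p ∣ N) (b : ℤ) :
    ¬ (p : ℤ) ^ 2 ∣ (cyclotomic N ℤ).eval b := by
  have := Fact.mk hp
  obtain ⟨m, rfl⟩ := hpN
  intro hsq
  have hm : m ≠ 0 := by rintro rfl; omega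
  have hpΦ : (p : ℤ) ∣ (cyclotomic (p * m) ℤ).eval b := (dvd_pow_self _ two_ne_zero).trans hsq
  have hS : (p : ℤ) ^ 2 ∣ ∑ i ∈ range p, (b ^ m) ^ i := by
    refine hsq.trans ?_
    simpa [mul_comm p m, eval_finsetSum] using
      eval_dvd (x := b) (cyclotomic_dvd_geom_sum_X_pow ℤ hm hp.one_lt)
  -- Fermat's little theorem: `b ^ m ≡ (b ^ p) ^ m = b ^ N ≡ 1 [ZMOD p]`.
  have hc : (p : ℤ) ∣ b ^ m - 1 := by
    rw [← ZMod.intCast_zmod_eq_zero_iff_dvd]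
    push_cast
    rw [← ZMod.pow_card (b : ZMod p), ← pow_mul, intCast_pow_eq_one_of_dvd_cyclotomic_eval hpΦ,
      sub_self]
  obtain ⟨t, ht⟩ := hc
  rcases hp.eq_two_or_odd' with rfl | hodd
  · obtain ⟨l, rfl⟩ := two_dvd_of_two_dvd_cyclotomic_eval_two_mul (by omega) hpΦ
    have hbl : Odd (b ^ l) := by
      have : Odd (b ^ (2 * l)) := ⟨t, by push_cast at ht; linarith⟩
      exact (Int.odd_pow.mp this).resolve_right (by omega) |>.pow
    have h4 := Int.sq_mod_four_eq_one_of_odd hbl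
    rw [← pow_mul, mul_comm] at h4
    simp only [sum_range_succ, sum_range_zero] at hS
    norm_num at hS
    omega
  · have h := odd_sq_dvd_geom_sum₂_sub 1 t hodd
    simp only [one_pow, mul_one, ← sub_eq_iff_eq_add'.mp ht] at h
    have : p ^ 2 ∣ p ^ 1 := by
      rw [pow_one]
      exact_mod_cast (dvd_sub_right hS).mp h
    have := (Nat.pow_dvd_pow_iff_le_right hp.one_lt).mp this
    omega

lemma coprime_div_gcd_of_not_sq_dvd {N n : ℕ} (h : ∀ p, p.Prime → p ∣ N → ¬ p ^ 2 ∣ n) :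
    (n / N.gcd n).Coprime N := by
  refine Nat.coprime_of_dvd fun p hp hpf hpN => h p hp hpN ?_
  have hpg : p ∣ N.gcd n :=
    Nat.dvd_gcd hpN (hpf.trans (Nat.div_dvd_of_dvd (Nat.gcd_dvd_right N n)))
  rw [← Nat.div_mul_cancel (Nat.gcd_dvd_right N n), pow_two]
  exact mul_dvd_mul hpf hpg

lemma midyPsp_of_dvd_cyclotomic_eval {N b f : ℕ} (hN : 2 < N) (hf : 1 < f) (hfp : ¬ f.Prime)
    (hfN : f.Coprime N) (hfΦ : (f : ℤ) ∣ (cyclotomic N ℤ).eval (b : ℤ)) : MidyPsp b f := by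
  have hroot (q : ℕ) (hq : q.Prime) (hqf : q ∣ f) : IsPrimitiveRoot (b : ZMod q) N := by
    have := Fact.mk hq
    have hqN : ¬ q ∣ N := (hq.coprime_iff_not_dvd).mp (hfN.coprime_dvd_left hqf)
    simpa using isPrimitiveRoot_of_prime_dvd_cyclotomic_eval hqN
      ((Int.natCast_dvd_natCast.mpr hqf).trans hfΦ)
  have hord (q : ℕ) (hq : q.Prime) (hqf : q ∣ f) : ord b q = N := (hroot q hq hqf).eq_orderOf.symm
  obtain ⟨q₀, hq₀, hq₀f⟩ := Nat.exists_prime_and_dvd hf.ne'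
  have hordf : ord b f = N := by
    refine Nat.dvd_antisymm (orderOf_dvd_of_pow_eq_one ?_) ?_
    · simpa using intCast_pow_eq_one_of_dvd_cyclotomic_eval hfΦ
    · rw [← hord q₀ hq₀ hq₀f, ord, ord]
      simpa using orderOf_map_dvd (ZMod.castHom hq₀f (ZMod q₀)).toMonoidHom (b : ZMod f)
  refine ⟨?_, hf, hfp, ?_, hordf ▸ hfN, fun q hq hqf => hordf.trans (hord q hq hqf).symm⟩
  · rw [← Nat.not_even_iff_odd, even_iff_two_dvd]
    intro h2f
    have := Fact.mk Nat.prime_two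
    have := (hroot 2 Nat.prime_two h2f).dvd_card_sub_one (by omega)
    have := Nat.le_of_dvd one_pos this
    omega
  · refine Nat.coprime_of_dvd fun q hq hqf hqb => ?_
    have := Fact.mk hq
    exact (hroot q hq hqf).ne_zero (by omega) ((ZMod.natCast_eq_zero_iff b q).mpr hqb)

theorem stmt12_general (N b : ℕ) (hN : 2 < N)
    (hcomp : 1 < fval N b ∧ ¬ (fval N b).Prime) :
    MidyPsp b (fval N b) := by
  have hΦ : (((cyclotomic N ℤ).eval (b : ℤ)).toNat : ℤ) = (cyclotomic N ℤ).eval (b : ℤ) :=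
    Int.toNat_of_nonneg (cyclotomic_pos hN _).le
  refine midyPsp_of_dvd_cyclotomic_eval hN hcomp.1 hcomp.2 ?_ ?_
  · refine coprime_div_gcd_of_not_sq_dvd fun p hp hpN hsq =>
      not_sq_dvd_cyclotomic_eval hN hp hpN b ?_
    rw [← hΦ]
    exact_mod_cast hsq
  · rw [← hΦ]
    exact Int.natCast_dvd_natCast.mpr (Nat.div_dvd_of_dvd (Nat.gcd_dvd_right _ _))

theorem stmt12 (N b : ℕ) (hN : 2 < N) (hb : 1 < b)
    (hcomp : 1 < fval N b ∧ ¬ (fval N b).Prime) :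
    MidyPsp b (fval N b) :=
  stmt12_general N b hN hcomp
end

section
/- Let p be an odd prime and 1 < b < p−1. Then N = (b^p + 1)/(b + 1) is either prime or a Midy pseudoprime to base b. -/
open Finset

theorem orderOf_eq_two_mul_of_pow_eq_neg_one {M : Type*} [Monoid M] [HasDistribNeg M] {x : M}
    {p : ℕ} (hp : p.Prime) (hodd : Odd p) (hM : (-1 : M) ≠ 1) (hx : x ^ p = -1)
    (hx1 : x ≠ -1) : orderOf x = 2 * p := by
  have := Fact.mk hp
  have h_neg_one : orderOf (-1 : M) = 2 := orderOf_eq_prime (by simp) hM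
  have h_neg : orderOf (-x) = p :=
    orderOf_eq_prime (by rw [hodd.neg_pow, hx, neg_neg]) fun h => hx1 (by rw [← h, neg_neg])
  rw [← neg_neg x, neg_eq_neg_one_mul (-x),
    (Commute.neg_one_left _).orderOf_mul_eq_mul_orderOf_of_coprime
      (by rw [h_neg_one, h_neg]; exact Nat.coprime_two_left.mpr hodd),
    h_neg_one, h_neg]

theorem ord_eq_two_mul {b m p : ℕ} (hp : p.Prime) (hodd : Odd p) (hm : 2 < m)
    (hdvd : m ∣ b ^ p + 1) (hndvd : ¬ m ∣ b + 1) : ord b m = 2 * p := by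
  have : Fact (2 < m) := ⟨hm⟩
  refine orderOf_eq_two_mul_of_pow_eq_neg_one hp hodd ZMod.neg_one_ne_one ?_ ?_
  · rw [eq_neg_iff_add_eq_zero]
    exact_mod_cast (ZMod.natCast_eq_zero_iff _ _).mpr hdvd
  · rw [Ne, eq_neg_iff_add_eq_zero]
    exact_mod_cast mt (ZMod.natCast_eq_zero_iff _ _).mp hndvd

theorem Nat.Prime.dvd_pow_add_one_iff {p : ℕ} (hp : p.Prime) (b : ℕ) :
    p ∣ b ^ p + 1 ↔ p ∣ b + 1 := by
  have := Fact.mk hp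
  simp only [← ZMod.natCast_eq_zero_iff, Nat.cast_add, Nat.cast_pow, ZMod.pow_card]

section QuotientOfPowAddOne

variable {b p N : ℕ}

theorem one_lt_of_mul_eq_pow_add_one (hb : 1 < b) (hp : 1 < p) (hN : (b + 1) * N = b ^ p + 1) :
    1 < N := by
  have hlt : (b + 1) * 1 < (b + 1) * N := by
    rw [hN, mul_one]
    simpa using Nat.pow_lt_pow_right hb hp
  exact Nat.lt_of_mul_lt_mul_left hlt

theorem modEq_of_mul_eq_pow_add_one (hp : Odd p) (hN : (b + 1) * N = b ^ p + 1) :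
    N ≡ p [MOD b + 1] := by
  have hgeom : (N : ℤ) = ∑ i ∈ range p, (-(b : ℤ)) ^ i := by
    have h := mul_neg_geom_sum (-(b : ℤ)) p
    rw [hp.neg_pow, sub_neg_eq_add, sub_neg_eq_add, add_comm 1 (b : ℤ), add_comm 1] at h
    refine mul_left_cancel₀ (by positivity : (b + 1 : ℤ) ≠ 0) ?_
    rw [h]
    exact_mod_cast hN
  have hb : (b : ZMod (b + 1)) = -1 :=
    eq_neg_of_add_eq_zero_left (by exact_mod_cast ZMod.natCast_self (b + 1))
  rw [← ZMod.natCast_eq_natCast_iff, ← Int.cast_natCast, hgeom]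
  simp [hb]

theorem odd_of_mul_eq_pow_add_one (hp : Odd p) (hN : (b + 1) * N = b ^ p + 1) : Odd N := by
  rcases Nat.even_or_odd b with hb | hb
  · have hodd : Odd ((b + 1) * N) := hN ▸ (hb.pow_of_ne_zero hp.pos.ne').add_one
    exact (Nat.odd_mul.mp hodd).2
  · have h2 := (modEq_of_mul_eq_pow_add_one hp hN).of_dvd (even_iff_two_dvd.mp hb.add_one)
    rw [Nat.odd_iff, h2]
    exact Nat.odd_iff.mp hp

theorem coprime_add_one_of_mul_eq_pow_add_one (hp : p.Prime) (hodd : Odd p) (hbp : b + 1 < p)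
    (hN : (b + 1) * N = b ^ p + 1) : N.Coprime (b + 1) := by
  rw [Nat.Coprime, (modEq_of_mul_eq_pow_add_one hodd hN).gcd_eq]
  exact hp.coprime_iff_not_dvd.mpr (Nat.not_dvd_of_pos_of_lt b.succ_pos hbp)

end QuotientOfPowAddOne

theorem stmt13 (p b : ℕ) (hp : p.Prime) (hodd : Odd p) (hb : 1 < b) (hbp : b < p - 1) :
    ((b ^ p + 1) / (b + 1)).Prime ∨ MidyPsp b ((b ^ p + 1) / (b + 1)) := by
  set N := (b ^ p + 1) / (b + 1)
  have hN : (b + 1) * N = b ^ p + 1 :=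
    Nat.mul_div_cancel' (by simpa using hodd.nat_add_dvd_pow_add_pow b 1)
  have hbp' : b + 1 < p := by omega
  have hN_dvd : N ∣ b ^ p + 1 := Dvd.intro_left _ hN
  have hN_one : 1 < N := one_lt_of_mul_eq_pow_add_one hb hp.one_lt hN
  have hN_odd : Odd N := odd_of_mul_eq_pow_add_one hodd hN
  have hN_cop : N.Coprime (b + 1) := coprime_add_one_of_mul_eq_pow_add_one hp hodd hbp' hN
  have hp_N : ¬ p ∣ N := fun h => Nat.not_dvd_of_pos_of_lt b.succ_pos hbp'
    ((hp.dvd_pow_add_one_iff b).mp (h.trans hN_dvd))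
  have hord : ord b N = 2 * p := ord_eq_two_mul hp hodd
    (by obtain ⟨k, hk⟩ := hN_odd; omega) hN_dvd fun h => hN_one.ne' (hN_cop.eq_one_of_dvd h)
  refine (em N.Prime).imp id fun hN_prime => ⟨hN_odd, hN_one, hN_prime, ?_, ?_, fun q hq hqN => ?_⟩
  · have hunit : IsUnit (b : ZMod N) :=
      (orderOf_pos_iff.mp (by rw [hord]; exact Nat.mul_pos two_pos hp.pos : 0 < ord b N)).isUnit
    exact ((ZMod.isUnit_iff_coprime b N).mp hunit).symm
  · rw [hord]
    exact Nat.Coprime.mul_right (Nat.coprime_two_right.mpr hN_odd)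
      (Nat.coprime_comm.mp (hp.coprime_iff_not_dvd.mpr hp_N))
  · have hq2 : 2 < q := by obtain ⟨k, hk⟩ := hN_odd.of_dvd_nat hqN; have := hq.two_le; omega
    have hqb : ¬ q ∣ b + 1 := hq.coprime_iff_not_dvd.mp (hN_cop.coprime_dvd_left hqN)
    rw [hord, ord_eq_two_mul hp hodd hq2 (hqN.trans hN_dvd) hqb]
end

section
/- If N is a Midy pseudoprime to base b, then N is a Midy pseudoprime to base b^t for every positive integer t (with b^t considered modulo N). -/
/-! Reducing `b ^ t` modulo `N` changes no order modulo a divisor of `N`, so every order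
`|b ^ t|_m` with `m ∣ N` is `|b|_m / gcd(|b|_m, t)`. The equalities `|b|_N = |b|_p` therefore
carry over to `b ^ t`, and `|b ^ t|_N` divides `|b|_N`, hence stays coprime to `N`. -/

lemma ZMod.natCast_mod_of_dvd (a : ℕ) {N m : ℕ} (hm : m ∣ N) :
    ((a % N : ℕ) : ZMod m) = a :=
  (ZMod.natCast_eq_natCast_iff _ _ _).mpr ((Nat.mod_modEq a N).of_dvd hm)

lemma ord_pow_mod (b : ℕ) {t N m : ℕ} (ht : t ≠ 0) (hm : m ∣ N) :
    ord (b ^ t % N) m = ord b m / (ord b m).gcd t := by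
  rw [ord, ZMod.natCast_mod_of_dvd _ hm, Nat.cast_pow, orderOf_pow' _ ht, ord]

lemma ord_pow_mod_dvd (b : ℕ) {t N : ℕ} (ht : t ≠ 0) : ord (b ^ t % N) N ∣ ord b N := by
  rw [ord_pow_mod b ht dvd_rfl]
  exact Nat.div_dvd_of_dvd (Nat.gcd_dvd_left _ _)

lemma Nat.Coprime.pow_mod {N b : ℕ} (h : N.Coprime b) (t : ℕ) : N.Coprime (b ^ t % N) := by
  rw [Nat.Coprime, Nat.gcd_comm, ← Nat.gcd_rec]
  exact h.pow_right t

theorem stmt15 (b N : ℕ) (h : MidyPsp b N) :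
    ∀ t : ℕ, 1 ≤ t → MidyPsp (b ^ t % N) N := by
  intro t ht
  have ht : t ≠ 0 := Nat.one_le_iff_ne_zero.mp ht
  obtain ⟨hodd, hN, hnp, hcop_base, hcop_ord, hord_eq⟩ := h
  refine ⟨hodd, hN, hnp, hcop_base.pow_mod t,
    hcop_ord.coprime_dvd_right (ord_pow_mod_dvd b ht), fun p hp hpN => ?_⟩
  rw [ord_pow_mod b ht dvd_rfl, ord_pow_mod b ht hpN, hord_eq p hp hpN]
end

section
/- If N is a Midy pseudoprime to base b, then N is a Fermat pseudoprime to base b, i.e., b^{N−1} ≡ 1 (mod N). -/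
/-! If `|b|_N = |b|_p` for every prime `p ∣ N`, then Fermat's little theorem gives
`|b|_N ∣ p - 1`, i.e. every prime factor of `N` is `≡ 1 (mod |b|_N)`. Hence so is their
product `N`, so `|b|_N ∣ N - 1`. -/

theorem pow_modEq_one_of_ord_dvd {b N k : ℕ} (h : ord b N ∣ k) : b ^ k ≡ 1 [MOD N] := by
  rw [← ZMod.natCast_eq_natCast_iff, Nat.cast_pow, Nat.cast_one]
  exact orderOf_dvd_iff_pow_eq_one.mp h

theorem ord_dvd_prime_sub_one {b p : ℕ} (hp : p.Prime) (hpb : p.Coprime b) :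
    ord b p ∣ p - 1 := by
  have : Fact p.Prime := ⟨hp⟩
  have hb : (b : ZMod p) ≠ 0 := by
    rwa [Ne, ZMod.natCast_eq_zero_iff, ← hp.coprime_iff_not_dvd]
  exact orderOf_dvd_of_pow_eq_one (ZMod.pow_card_sub_one_eq_one hb)

theorem modEq_one_of_forall_prime_dvd {N e : ℕ} (hN : N ≠ 0)
    (h : ∀ p, p.Prime → p ∣ N → p ≡ 1 [MOD e]) : N ≡ 1 [MOD e] := by
  suffices ∀ M, M ∣ N → M ≡ 1 [MOD e] from this N dvd_rfl
  intro M
  induction M using induction_on_primes with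
  | zero => exact fun h0 => absurd (zero_dvd_iff.mp h0) hN
  | one => exact fun _ => rfl
  | prime_mul p M hp ih =>
    intro hpM
    simpa using (h p hp (dvd_of_mul_right_dvd hpM)).mul (ih (dvd_of_mul_left_dvd hpM))

theorem stmt16 (b N : ℕ) (h : MidyPsp b N) : b ^ (N - 1) ≡ 1 [MOD N] := by
  obtain ⟨-, hN, -, hcop, -, hord⟩ := h
  have hprime : ∀ p, p.Prime → p ∣ N → p ≡ 1 [MOD ord b N] := by
    intro p hp hpN
    rw [hord p hp hpN, Nat.ModEq.comm, Nat.modEq_iff_dvd' hp.one_lt.le]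
    exact ord_dvd_prime_sub_one hp (hcop.coprime_dvd_left hpN)
  have hNmod : N ≡ 1 [MOD ord b N] := modEq_one_of_forall_prime_dvd (by omega) hprime
  exact pow_modEq_one_of_ord_dvd ((Nat.modEq_iff_dvd' hN.le).mp hNmod.symm)
end

section
/- The number 2047 is a Midy pseudoprime to base 2, and no odd composite number less than 2047 is a Midy pseudoprime to base 2. -/
/-- `N` is a strong pseudoprime to base `b`: `N` is odd composite, coprime to `b`, and,
writing `N − 1 = 2^r·s` with `s` odd, `b^s ≡ 1 (mod N)` or `b^{2^i·s} ≡ −1 (mod N)`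
for some `0 ≤ i < r`. -/
def StrongPsp (b N : ℕ) : Prop :=
  Odd N ∧ 1 < N ∧ ¬ N.Prime ∧ Nat.Coprime N b ∧
    (b ^ ((N - 1) / 2 ^ padicValNat 2 (N - 1)) ≡ 1 [MOD N] ∨
      ∃ i < padicValNat 2 (N - 1),
        (b : ZMod N) ^ (2 ^ i * ((N - 1) / 2 ^ padicValNat 2 (N - 1))) = -1)

/-! ### Auxiliary boolean checkers -/

/-- `allLt f n = true` iff `f m = true` for all `m < n`. -/
def allLt (f : ℕ → Bool) : ℕ → Bool
  | 0 => true
  | m + 1 => allLt f m && f m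

lemma allLt_sound {f : ℕ → Bool} : ∀ {n : ℕ}, allLt f n = true → ∀ m < n, f m = true := by
  intro n
  induction n with
  | zero => intro _ m hm; omega
  | succ n ih =>
    intro h m hm
    rw [allLt, Bool.and_eq_true] at h
    rcases Nat.lt_succ_iff_lt_or_eq.mp hm with h' | rfl
    · exact ih h.1 m h'
    · exact h.2

/-- `allRange f lo len = true` iff `f m = true` for all `lo ≤ m < lo + len`. -/
def allRange (f : ℕ → Bool) (lo : ℕ) : ℕ → Bool
  | 0 => true
  | m + 1 => allRange f lo m && f (lo + m)

lemma allRange_sound {f : ℕ → Bool} {lo : ℕ} : ∀ {len : ℕ}, allRange f lo len = true →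
    ∀ m, lo ≤ m → m < lo + len → f m = true := by
  intro len
  induction len with
  | zero => intro _ m _ _; omega
  | succ n ih =>
    intro h m h1 h2
    rw [allRange, Bool.and_eq_true] at h
    rcases Nat.eq_or_lt_of_le (Nat.lt_succ_iff.mp (by omega : m - lo < n + 1)) with he | hlt
    · have : m = lo + n := by omega
      exact this ▸ h.2
    · exact ih h.1 m h1 (by omega)

/-- `noDivSq n k f = true` iff no `j` with `k ≤ j < k + f` and `j * j ≤ n` divides `n`. -/
def noDivSq (n : ℕ) : ℕ → ℕ → Bool
  | _, 0 => true
  | k, f + 1 => decide (n < k * k) || (decide (n % k ≠ 0) && noDivSq n (k + 1) f)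

lemma noDivSq_sound {n : ℕ} : ∀ (f k : ℕ), noDivSq n k f = true →
    ∀ j, k ≤ j → j < k + f → j * j ≤ n → n % j ≠ 0 := by
  intro f
  induction f with
  | zero => intro k _ j _ _; omega
  | succ f ih =>
    intro k h j h1 h2 h3
    rw [noDivSq] at h
    rw [Bool.or_eq_true] at h
    rcases h with h | h
    · rw [decide_eq_true_iff] at h
      have := Nat.mul_le_mul h1 h1
      omega
    · rw [Bool.and_eq_true, decide_eq_true_iff] at h
      rcases Nat.eq_or_lt_of_le h1 with rfl | hlt
      · exact h.1
      · exact ih (k + 1) h.2 j hlt (by omega) h3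

/-- Boolean primality test by trial division up to the square root. -/
def isPrimeB (n : ℕ) : Bool := decide (2 ≤ n) && noDivSq n 2 n

lemma isPrimeB_sound {n : ℕ} (h : isPrimeB n = true) : n.Prime := by
  rw [isPrimeB, Bool.and_eq_true, decide_eq_true_iff] at h
  obtain ⟨h1, h2⟩ := h
  rw [Nat.prime_def_le_sqrt]
  refine ⟨h1, fun m hm hms hdvd => ?_⟩
  have hmm : m * m ≤ n := Nat.le_sqrt.mp hms
  have hmn : m ≤ m * m := Nat.le_mul_of_pos_left m (by omega)
  obtain ⟨k, rfl⟩ := hdvd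
  exact noDivSq_sound (m * k) 2 h2 m hm (by omega) hmm (Nat.mul_mod_right m k)

lemma pow_cast_eq_one_iff (b d N : ℕ) (hN : 1 < N) :
    ((b : ZMod N)) ^ d = 1 ↔ b ^ d % N = 1 := by
  rw [← Nat.cast_pow, show (1 : ZMod N) = ((1 : ℕ) : ZMod N) by simp,
    ZMod.natCast_eq_natCast_iff, Nat.ModEq, Nat.one_mod_eq_one.mpr (by omega)]

lemma ord_eq_of {b p d : ℕ} (hp : 1 < p) (hd : 0 < d) (h1 : b ^ d % p = 1)
    (h2 : ∀ m, m < d → 0 < m → b ^ m % p ≠ 1) : ord b p = d := by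
  rw [ord, orderOf_eq_iff hd]
  exact ⟨(pow_cast_eq_one_iff b d p hp).mpr h1,
    fun m hm hm0 h => h2 m hm hm0 ((pow_cast_eq_one_iff b m p hp).mp h)⟩

lemma not_midy {N p d : ℕ} (hp : p.Prime) (hpN : p ∣ N) (hord : ord 2 p = d)
    (hne : 2 ^ d % N ≠ 1) : ¬ MidyPsp 2 N := by
  rintro ⟨-, hN1, -, -, -, hall⟩
  have h : ord 2 N = d := (hall p hp hpN).trans hord
  have h1 : ((2 : ℕ) : ZMod N) ^ d = 1 := by
    rw [← h, ord]; exact pow_orderOf_eq_one _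
  exact hne ((pow_cast_eq_one_iff 2 d N hN1).mp h1)

/-- Certificate check: `p` is a prime divisor of `N`, `ord 2 p = d`, and `2^d % N ≠ 1`. -/
def certOK (N p d : ℕ) : Bool :=
  isPrimeB p && decide (N % p = 0) && decide (0 < d) && decide (2 ^ d % p = 1) &&
    allLt (fun m => decide (m = 0) || decide (2 ^ m % p ≠ 1)) d && decide (2 ^ d % N ≠ 1)

lemma certOK_sound {N p d : ℕ} (h : certOK N p d = true) : ¬ MidyPsp 2 N := by
  rw [certOK] at h
  simp only [Bool.and_eq_true, decide_eq_true_iff] at h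
  obtain ⟨⟨⟨⟨⟨hp, hdvd⟩, hd⟩, h1⟩, hmin⟩, hne⟩ := h
  have hp' := isPrimeB_sound hp
  refine not_midy hp' (Nat.dvd_of_mod_eq_zero hdvd) (ord_eq_of hp'.one_lt hd h1 ?_) hne
  intro m hm hm0
  have := allLt_sound hmin m hm
  simp only [Bool.or_eq_true, decide_eq_true_iff] at this
  rcases this with h' | h'
  · omega
  · exact h'

/-- Certificates `(N, p, d)` for every odd composite `N < 2047`. -/
def certs : List (ℕ × ℕ × ℕ) :=
  [(9, 3, 2),
  (15, 3, 2),
  (21, 3, 2),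
  (25, 5, 4),
  (27, 3, 2),
  (33, 3, 2),
  (35, 7, 3),
  (39, 3, 2),
  (45, 3, 2),
  (49, 7, 3),
  (51, 3, 2),
  (55, 5, 4),
  (57, 3, 2),
  (63, 3, 2),
  (65, 5, 4),
  (69, 3, 2),
  (75, 3, 2),
  (77, 7, 3),
  (81, 3, 2),
  (85, 5, 4),
  (87, 3, 2),
  (91, 7, 3),
  (93, 3, 2),
  (95, 5, 4),
  (99, 3, 2),
  (105, 3, 2),
  (111, 3, 2),
  (115, 5, 4),
  (117, 3, 2),
  (119, 7, 3),
  (121, 11, 10),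
  (123, 3, 2),
  (125, 5, 4),
  (129, 3, 2),
  (133, 7, 3),
  (135, 3, 2),
  (141, 3, 2),
  (143, 11, 10),
  (145, 5, 4),
  (147, 3, 2),
  (153, 3, 2),
  (155, 5, 4),
  (159, 3, 2),
  (161, 7, 3),
  (165, 3, 2),
  (169, 13, 12),
  (171, 3, 2),
  (175, 7, 3),
  (177, 3, 2),
  (183, 3, 2),
  (185, 5, 4),
  (187, 17, 8),
  (189, 3, 2),
  (195, 3, 2),
  (201, 3, 2),
  (203, 7, 3),
  (205, 5, 4),
  (207, 3, 2),
  (209, 11, 10),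
  (213, 3, 2),
  (215, 5, 4),
  (217, 7, 3),
  (219, 3, 2),
  (221, 17, 8),
  (225, 3, 2),
  (231, 3, 2),
  (235, 5, 4),
  (237, 3, 2),
  (243, 3, 2),
  (245, 7, 3),
  (247, 13, 12),
  (249, 3, 2),
  (253, 11, 10),
  (255, 3, 2),
  (259, 7, 3),
  (261, 3, 2),
  (265, 5, 4),
  (267, 3, 2),
  (273, 3, 2),
  (275, 5, 4),
  (279, 3, 2),
  (285, 3, 2),
  (287, 7, 3),
  (289, 17, 8),
  (291, 3, 2),
  (295, 5, 4),
  (297, 3, 2),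
  (299, 23, 11),
  (301, 7, 3),
  (303, 3, 2),
  (305, 5, 4),
  (309, 3, 2),
  (315, 3, 2),
  (319, 11, 10),
  (321, 3, 2),
  (323, 17, 8),
  (325, 5, 4),
  (327, 3, 2),
  (329, 7, 3),
  (333, 3, 2),
  (335, 5, 4),
  (339, 3, 2),
  (341, 31, 5),
  (343, 7, 3),
  (345, 3, 2),
  (351, 3, 2),
  (355, 5, 4),
  (357, 3, 2),
  (361, 19, 18),
  (363, 3, 2),
  (365, 5, 4),
  (369, 3, 2),
  (371, 7, 3),
  (375, 3, 2),
  (377, 13, 12),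
  (381, 3, 2),
  (385, 7, 3),
  (387, 3, 2),
  (391, 17, 8),
  (393, 3, 2),
  (395, 5, 4),
  (399, 3, 2),
  (403, 31, 5),
  (405, 3, 2),
  (407, 11, 10),
  (411, 3, 2),
  (413, 7, 3),
  (415, 5, 4),
  (417, 3, 2),
  (423, 3, 2),
  (425, 5, 4),
  (427, 7, 3),
  (429, 3, 2),
  (435, 3, 2),
  (437, 23, 11),
  (441, 3, 2),
  (445, 5, 4),
  (447, 3, 2),
  (451, 11, 10),
  (453, 3, 2),
  (455, 7, 3),
  (459, 3, 2),
  (465, 3, 2),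
  (469, 7, 3),
  (471, 3, 2),
  (473, 11, 10),
  (475, 5, 4),
  (477, 3, 2),
  (481, 13, 12),
  (483, 3, 2),
  (485, 5, 4),
  (489, 3, 2),
  (493, 17, 8),
  (495, 3, 2),
  (497, 7, 3),
  (501, 3, 2),
  (505, 5, 4),
  (507, 3, 2),
  (511, 7, 3),
  (513, 3, 2),
  (515, 5, 4),
  (517, 11, 10),
  (519, 3, 2),
  (525, 3, 2),
  (527, 31, 5),
  (529, 23, 11),
  (531, 3, 2),
  (533, 13, 12),
  (535, 5, 4),
  (537, 3, 2),
  (539, 7, 3),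
  (543, 3, 2),
  (545, 5, 4),
  (549, 3, 2),
  (551, 19, 18),
  (553, 7, 3),
  (555, 3, 2),
  (559, 13, 12),
  (561, 3, 2),
  (565, 5, 4),
  (567, 3, 2),
  (573, 3, 2),
  (575, 5, 4),
  (579, 3, 2),
  (581, 7, 3),
  (583, 11, 10),
  (585, 3, 2),
  (589, 31, 5),
  (591, 3, 2),
  (595, 7, 3),
  (597, 3, 2),
  (603, 3, 2),
  (605, 5, 4),
  (609, 3, 2),
  (611, 13, 12),
  (615, 3, 2),
  (621, 3, 2),
  (623, 7, 3),
  (625, 5, 4),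
  (627, 3, 2),
  (629, 17, 8),
  (633, 3, 2),
  (635, 5, 4),
  (637, 7, 3),
  (639, 3, 2),
  (645, 3, 2),
  (649, 11, 10),
  (651, 3, 2),
  (655, 5, 4),
  (657, 3, 2),
  (663, 3, 2),
  (665, 7, 3),
  (667, 23, 11),
  (669, 3, 2),
  (671, 11, 10),
  (675, 3, 2),
  (679, 7, 3),
  (681, 3, 2),
  (685, 5, 4),
  (687, 3, 2),
  (689, 13, 12),
  (693, 3, 2),
  (695, 5, 4),
  (697, 17, 8),
  (699, 3, 2),
  (703, 19, 18),
  (705, 3, 2),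
  (707, 7, 3),
  (711, 3, 2),
  (713, 31, 5),
  (715, 5, 4),
  (717, 3, 2),
  (721, 7, 3),
  (723, 3, 2),
  (725, 5, 4),
  (729, 3, 2),
  (731, 17, 8),
  (735, 3, 2),
  (737, 11, 10),
  (741, 3, 2),
  (745, 5, 4),
  (747, 3, 2),
  (749, 7, 3),
  (753, 3, 2),
  (755, 5, 4),
  (759, 3, 2),
  (763, 7, 3),
  (765, 3, 2),
  (767, 13, 12),
  (771, 3, 2),
  (775, 5, 4),
  (777, 3, 2),
  (779, 19, 18),
  (781, 11, 10),
  (783, 3, 2),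
  (785, 5, 4),
  (789, 3, 2),
  (791, 7, 3),
  (793, 13, 12),
  (795, 3, 2),
  (799, 17, 8),
  (801, 3, 2),
  (803, 73, 9),
  (805, 7, 3),
  (807, 3, 2),
  (813, 3, 2),
  (815, 5, 4),
  (817, 43, 14),
  (819, 3, 2),
  (825, 3, 2),
  (831, 3, 2),
  (833, 7, 3),
  (835, 5, 4),
  (837, 3, 2),
  (841, 29, 28),
  (843, 3, 2),
  (845, 5, 4),
  (847, 7, 3),
  (849, 3, 2),
  (851, 23, 11),
  (855, 3, 2),
  (861, 3, 2),
  (865, 5, 4),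
  (867, 3, 2),
  (869, 11, 10),
  (871, 13, 12),
  (873, 3, 2),
  (875, 7, 3),
  (879, 3, 2),
  (885, 3, 2),
  (889, 7, 3),
  (891, 3, 2),
  (893, 19, 18),
  (895, 5, 4),
  (897, 3, 2),
  (899, 31, 5),
  (901, 17, 8),
  (903, 3, 2),
  (905, 5, 4),
  (909, 3, 2),
  (913, 11, 10),
  (915, 3, 2),
  (917, 7, 3),
  (921, 3, 2),
  (923, 13, 12),
  (925, 5, 4),
  (927, 3, 2),
  (931, 7, 3),
  (933, 3, 2),
  (935, 5, 4),
  (939, 3, 2),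
  (943, 23, 11),
  (945, 3, 2),
  (949, 73, 9),
  (951, 3, 2),
  (955, 5, 4),
  (957, 3, 2),
  (959, 7, 3),
  (961, 31, 5),
  (963, 3, 2),
  (965, 5, 4),
  (969, 3, 2),
  (973, 7, 3),
  (975, 3, 2),
  (979, 11, 10),
  (981, 3, 2),
  (985, 5, 4),
  (987, 3, 2),
  (989, 23, 11),
  (993, 3, 2),
  (995, 5, 4),
  (999, 3, 2),
  (1001, 7, 3),
  (1003, 17, 8),
  (1005, 3, 2),
  (1007, 19, 18),
  (1011, 3, 2),
  (1015, 7, 3),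
  (1017, 3, 2),
  (1023, 3, 2),
  (1025, 5, 4),
  (1027, 13, 12),
  (1029, 3, 2),
  (1035, 3, 2),
  (1037, 17, 8),
  (1041, 3, 2),
  (1043, 7, 3),
  (1045, 5, 4),
  (1047, 3, 2),
  (1053, 3, 2),
  (1055, 5, 4),
  (1057, 7, 3),
  (1059, 3, 2),
  (1065, 3, 2),
  (1067, 11, 10),
  (1071, 3, 2),
  (1073, 29, 28),
  (1075, 5, 4),
  (1077, 3, 2),
  (1079, 13, 12),
  (1081, 23, 11),
  (1083, 3, 2),
  (1085, 7, 3),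
  (1089, 3, 2),
  (1095, 3, 2),
  (1099, 7, 3),
  (1101, 3, 2),
  (1105, 5, 4),
  (1107, 3, 2),
  (1111, 11, 10),
  (1113, 3, 2),
  (1115, 5, 4),
  (1119, 3, 2),
  (1121, 19, 18),
  (1125, 3, 2),
  (1127, 7, 3),
  (1131, 3, 2),
  (1133, 11, 10),
  (1135, 5, 4),
  (1137, 3, 2),
  (1139, 17, 8),
  (1141, 7, 3),
  (1143, 3, 2),
  (1145, 5, 4),
  (1147, 31, 5),
  (1149, 3, 2),
  (1155, 3, 2),
  (1157, 89, 11),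
  (1159, 19, 18),
  (1161, 3, 2),
  (1165, 5, 4),
  (1167, 3, 2),
  (1169, 7, 3),
  (1173, 3, 2),
  (1175, 5, 4),
  (1177, 11, 10),
  (1179, 3, 2),
  (1183, 7, 3),
  (1185, 3, 2),
  (1189, 41, 20),
  (1191, 3, 2),
  (1195, 5, 4),
  (1197, 3, 2),
  (1199, 11, 10),
  (1203, 3, 2),
  (1205, 5, 4),
  (1207, 17, 8),
  (1209, 3, 2),
  (1211, 7, 3),
  (1215, 3, 2),
  (1219, 23, 11),
  (1221, 3, 2),
  (1225, 7, 3),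
  (1227, 3, 2),
  (1233, 3, 2),
  (1235, 5, 4),
  (1239, 3, 2),
  (1241, 17, 8),
  (1243, 11, 10),
  (1245, 3, 2),
  (1247, 43, 14),
  (1251, 3, 2),
  (1253, 7, 3),
  (1255, 5, 4),
  (1257, 3, 2),
  (1261, 13, 12),
  (1263, 3, 2),
  (1265, 5, 4),
  (1267, 7, 3),
  (1269, 3, 2),
  (1271, 31, 5),
  (1273, 19, 18),
  (1275, 3, 2),
  (1281, 3, 2),
  (1285, 5, 4),
  (1287, 3, 2),
  (1293, 3, 2),
  (1295, 7, 3),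
  (1299, 3, 2),
  (1305, 3, 2),
  (1309, 7, 3),
  (1311, 3, 2),
  (1313, 13, 12),
  (1315, 5, 4),
  (1317, 3, 2),
  (1323, 3, 2),
  (1325, 5, 4),
  (1329, 3, 2),
  (1331, 11, 10),
  (1333, 31, 5),
  (1335, 3, 2),
  (1337, 7, 3),
  (1339, 13, 12),
  (1341, 3, 2),
  (1343, 17, 8),
  (1345, 5, 4),
  (1347, 3, 2),
  (1349, 19, 18),
  (1351, 7, 3),
  (1353, 3, 2),
  (1355, 5, 4),
  (1357, 23, 11),
  (1359, 3, 2),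
  (1363, 47, 23),
  (1365, 3, 2),
  (1369, 37, 36),
  (1371, 3, 2),
  (1375, 5, 4),
  (1377, 3, 2),
  (1379, 7, 3),
  (1383, 3, 2),
  (1385, 5, 4),
  (1387, 73, 9),
  (1389, 3, 2),
  (1391, 13, 12),
  (1393, 7, 3),
  (1395, 3, 2),
  (1397, 127, 7),
  (1401, 3, 2),
  (1403, 23, 11),
  (1405, 5, 4),
  (1407, 3, 2),
  (1411, 17, 8),
  (1413, 3, 2),
  (1415, 5, 4),
  (1417, 13, 12),
  (1419, 3, 2),
  (1421, 7, 3),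
  (1425, 3, 2),
  (1431, 3, 2),
  (1435, 7, 3),
  (1437, 3, 2),
  (1441, 11, 10),
  (1443, 3, 2),
  (1445, 5, 4),
  (1449, 3, 2),
  (1455, 3, 2),
  (1457, 31, 5),
  (1461, 3, 2),
  (1463, 7, 3),
  (1465, 5, 4),
  (1467, 3, 2),
  (1469, 13, 12),
  (1473, 3, 2),
  (1475, 5, 4),
  (1477, 7, 3),
  (1479, 3, 2),
  (1485, 3, 2),
  (1491, 3, 2),
  (1495, 5, 4),
  (1497, 3, 2),
  (1501, 19, 18),
  (1503, 3, 2),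
  (1505, 7, 3),
  (1507, 11, 10),
  (1509, 3, 2),
  (1513, 17, 8),
  (1515, 3, 2),
  (1517, 41, 20),
  (1519, 7, 3),
  (1521, 3, 2),
  (1525, 5, 4),
  (1527, 3, 2),
  (1529, 11, 10),
  (1533, 3, 2),
  (1535, 5, 4),
  (1537, 29, 28),
  (1539, 3, 2),
  (1541, 23, 11),
  (1545, 3, 2),
  (1547, 7, 3),
  (1551, 3, 2),
  (1555, 5, 4),
  (1557, 3, 2),
  (1561, 7, 3),
  (1563, 3, 2),
  (1565, 5, 4),
  (1569, 3, 2),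
  (1573, 11, 10),
  (1575, 3, 2),
  (1577, 19, 18),
  (1581, 3, 2),
  (1585, 5, 4),
  (1587, 3, 2),
  (1589, 7, 3),
  (1591, 43, 14),
  (1593, 3, 2),
  (1595, 5, 4),
  (1599, 3, 2),
  (1603, 7, 3),
  (1605, 3, 2),
  (1611, 3, 2),
  (1615, 5, 4),
  (1617, 3, 2),
  (1623, 3, 2),
  (1625, 5, 4),
  (1629, 3, 2),
  (1631, 7, 3),
  (1633, 23, 11),
  (1635, 3, 2),
  (1639, 11, 10),
  (1641, 3, 2),
  (1643, 31, 5),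
  (1645, 7, 3),
  (1647, 3, 2),
  (1649, 17, 8),
  (1651, 127, 7),
  (1653, 3, 2),
  (1655, 5, 4),
  (1659, 3, 2),
  (1661, 11, 10),
  (1665, 3, 2),
  (1671, 3, 2),
  (1673, 7, 3),
  (1675, 5, 4),
  (1677, 3, 2),
  (1679, 73, 9),
  (1681, 41, 20),
  (1683, 3, 2),
  (1685, 5, 4),
  (1687, 7, 3),
  (1689, 3, 2),
  (1691, 89, 11),
  (1695, 3, 2),
  (1701, 3, 2),
  (1703, 13, 12),
  (1705, 5, 4),
  (1707, 3, 2),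
  (1711, 29, 28),
  (1713, 3, 2),
  (1715, 7, 3),
  (1717, 17, 8),
  (1719, 3, 2),
  (1725, 3, 2),
  (1727, 11, 10),
  (1729, 7, 3),
  (1731, 3, 2),
  (1735, 5, 4),
  (1737, 3, 2),
  (1739, 47, 23),
  (1743, 3, 2),
  (1745, 5, 4),
  (1749, 3, 2),
  (1751, 17, 8),
  (1755, 3, 2),
  (1757, 7, 3),
  (1761, 3, 2),
  (1763, 43, 14),
  (1765, 5, 4),
  (1767, 3, 2),
  (1769, 29, 28),
  (1771, 7, 3),
  (1773, 3, 2),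
  (1775, 5, 4),
  (1779, 3, 2),
  (1781, 13, 12),
  (1785, 3, 2),
  (1791, 3, 2),
  (1793, 11, 10),
  (1795, 5, 4),
  (1797, 3, 2),
  (1799, 7, 3),
  (1803, 3, 2),
  (1805, 5, 4),
  (1807, 13, 12),
  (1809, 3, 2),
  (1813, 7, 3),
  (1815, 3, 2),
  (1817, 23, 11),
  (1819, 17, 8),
  (1821, 3, 2),
  (1825, 5, 4),
  (1827, 3, 2),
  (1829, 31, 5),
  (1833, 3, 2),
  (1835, 5, 4),
  (1837, 11, 10),
  (1839, 3, 2),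
  (1841, 7, 3),
  (1843, 19, 18),
  (1845, 3, 2),
  (1849, 43, 14),
  (1851, 3, 2),
  (1853, 17, 8),
  (1855, 7, 3),
  (1857, 3, 2),
  (1859, 11, 10),
  (1863, 3, 2),
  (1865, 5, 4),
  (1869, 3, 2),
  (1875, 3, 2),
  (1881, 3, 2),
  (1883, 7, 3),
  (1885, 5, 4),
  (1887, 3, 2),
  (1891, 31, 5),
  (1893, 3, 2),
  (1895, 5, 4),
  (1897, 7, 3),
  (1899, 3, 2),
  (1903, 11, 10),
  (1905, 3, 2),
  (1909, 23, 11),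
  (1911, 3, 2),
  (1915, 5, 4),
  (1917, 3, 2),
  (1919, 19, 18),
  (1921, 17, 8),
  (1923, 3, 2),
  (1925, 7, 3),
  (1927, 41, 20),
  (1929, 3, 2),
  (1935, 3, 2),
  (1937, 13, 12),
  (1939, 7, 3),
  (1941, 3, 2),
  (1943, 29, 28),
  (1945, 5, 4),
  (1947, 3, 2),
  (1953, 3, 2),
  (1955, 5, 4),
  (1957, 19, 18),
  (1959, 3, 2),
  (1961, 37, 36),
  (1963, 13, 12),
  (1965, 3, 2),
  (1967, 7, 3),
  (1969, 11, 10),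
  (1971, 3, 2),
  (1975, 5, 4),
  (1977, 3, 2),
  (1981, 7, 3),
  (1983, 3, 2),
  (1985, 5, 4),
  (1989, 3, 2),
  (1991, 11, 10),
  (1995, 3, 2),
  (2001, 3, 2),
  (2005, 5, 4),
  (2007, 3, 2),
  (2009, 7, 3),
  (2013, 3, 2),
  (2015, 5, 4),
  (2019, 3, 2),
  (2021, 43, 14),
  (2023, 7, 3),
  (2025, 3, 2),
  (2031, 3, 2),
  (2033, 19, 18),
  (2035, 5, 4),
  (2037, 3, 2),
  (2041, 13, 12),
  (2043, 3, 2),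
  (2045, 5, 4)]

/-- For every `N < 2047`: either `N` is even, or `N ≤ 1`, or a certificate applies,
or `N` is prime. -/
def okB (N : ℕ) : Bool :=
  decide (N % 2 = 0) || decide (N ≤ 1) ||
    certs.any (fun c => c.1 == N && certOK N c.2.1 c.2.2) || isPrimeB N

lemma okB_sound {N : ℕ} (h : okB N = true) (hM : MidyPsp 2 N) : False := by
  have hodd := hM.1
  have hN1 := hM.2.1
  have hnp := hM.2.2.1
  rw [okB] at h
  simp only [Bool.or_eq_true, decide_eq_true_iff] at h
  rcases h with ((h | h) | h) | h
  · rw [Nat.odd_iff] at hodd; omega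
  · omega
  · rw [List.any_eq_true] at h
    obtain ⟨c, -, hc⟩ := h
    rw [Bool.and_eq_true] at hc
    exact certOK_sound hc.2 hM
  · exact hnp (isPrimeB_sound h)

set_option maxRecDepth 100000 in
set_option maxHeartbeats 4000000 in
lemma chunk0 : allRange okB 0 256 = true := by decide

set_option maxRecDepth 100000 in
set_option maxHeartbeats 4000000 in
lemma chunk1 : allRange okB 256 256 = true := by decide

set_option maxRecDepth 100000 in
set_option maxHeartbeats 4000000 in
lemma chunk2 : allRange okB 512 256 = true := by decide

set_option maxRecDepth 100000 in
set_option maxHeartbeats 4000000 in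
lemma chunk3 : allRange okB 768 256 = true := by decide

set_option maxRecDepth 100000 in
set_option maxHeartbeats 4000000 in
lemma chunk4 : allRange okB 1024 256 = true := by decide

set_option maxRecDepth 100000 in
set_option maxHeartbeats 4000000 in
lemma chunk5 : allRange okB 1280 256 = true := by decide

set_option maxRecDepth 100000 in
set_option maxHeartbeats 4000000 in
lemma chunk6 : allRange okB 1536 256 = true := by decide

set_option maxRecDepth 100000 in
set_option maxHeartbeats 4000000 in
lemma chunk7 : allRange okB 1792 255 = true := by decide

set_option maxRecDepth 100000 in
theorem stmt18 : MidyPsp 2 2047 ∧ ∀ N : ℕ, N < 2047 → ¬ MidyPsp 2 N := by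
  constructor
  · have h23 : ord 2 23 = 11 := ord_eq_of (by norm_num) (by norm_num) (by norm_num)
      (by decide)
    have h89 : ord 2 89 = 11 := ord_eq_of (by norm_num) (by norm_num) (by norm_num)
      (by decide)
    have h2047 : ord 2 2047 = 11 := ord_eq_of (by norm_num) (by norm_num) (by norm_num)
      (by decide)
    refine ⟨⟨1023, by norm_num⟩, by norm_num, ?_, by decide, ?_, ?_⟩
    · intro h
      rcases h.eq_one_or_self_of_dvd 23 ⟨89, rfl⟩ with h' | h' <;> omega
    · rw [h2047]; decide
    · intro p hp hpN
      have hpN' : p ∣ 23 * 89 := hpN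
      rcases (Nat.Prime.dvd_mul hp).mp hpN' with h' | h'
      · rw [h2047, (Nat.prime_dvd_prime_iff_eq hp (by norm_num)).mp h', h23]
      · rw [h2047, (Nat.prime_dvd_prime_iff_eq hp (by norm_num)).mp h', h89]
  · intro N hN hM
    rcases (by omega : N < 256 ∨ 256 ≤ N ∧ N < 512 ∨ 512 ≤ N ∧ N < 768 ∨
        768 ≤ N ∧ N < 1024 ∨ 1024 ≤ N ∧ N < 1280 ∨ 1280 ≤ N ∧ N < 1536 ∨
        1536 ≤ N ∧ N < 1792 ∨ 1792 ≤ N) with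
      h | h | h | h | h | h | h | h
    · exact okB_sound (allRange_sound chunk0 N (by omega) (by omega)) hM
    · exact okB_sound (allRange_sound chunk1 N (by omega) (by omega)) hM
    · exact okB_sound (allRange_sound chunk2 N (by omega) (by omega)) hM
    · exact okB_sound (allRange_sound chunk3 N (by omega) (by omega)) hM
    · exact okB_sound (allRange_sound chunk4 N (by omega) (by omega)) hM
    · exact okB_sound (allRange_sound chunk5 N (by omega) (by omega)) hM
    · exact okB_sound (allRange_sound chunk6 N (by omega) (by omega)) hM
    · exact okB_sound (allRange_sound chunk7 N (by omega) (by omega)) hM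
end
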